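/- For a fixed integer k ≥ 1, the 2k permutations of {1,…,2k} defined by π_{2j-1}: 2i-1 ↦ (2i-1+2j-2) mod⁺ 2k, 2i ↦ (2i+2j-2) mod⁺ 2k and π_{2j}: 2i-1 ↦ (2i-1+2j-1) mod⁺ 2k, 2i ↦ (2i+2j-3) mod⁺ 2k for 1 ≤ j ≤ k partition {1,…,2k}×{1,…,2k} in the following sense: for every pair (a,b) ∈ {1,…,2k}², there is exactly one index m ∈ {1,…,2k} with π_m(a) = b. -/
import Mathlib


def modPlus (m n : ℕ) : ℕ := if m % n = 0 then n else m % n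

/-- The `m`-th permutation of the gadget: for odd `m = 2j-1` it shifts by `2j-2 = m-1`;
for even `m = 2j` it sends odd `a` to `a + 2j - 1 = a + m - 1` and even `a`
to `a + 2j - 3 = a + m - 3`, all taken `mod⁺ 2k`. -/
def gadgetPerm (k m a : ℕ) : ℕ :=
  if m % 2 = 1 then modPlus (a + (m - 1)) (2 * k)
  else if a % 2 = 1 then modPlus (a + m - 1) (2 * k)
  else modPlus (a + m - 3) (2 * k)

lemma modPlus_bounds {n : ℕ} (hn : 1 ≤ n) (x : ℕ) :
    1 ≤ modPlus x n ∧ modPlus x n ≤ n := by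
  unfold modPlus
  split
  · omega
  · have := Nat.mod_lt x (show 0 < n by omega)
    omega

lemma modPlus_mod {n : ℕ} (x : ℕ) : modPlus x n % n = x % n := by
  unfold modPlus
  split
  · simp_all [Nat.mod_self]
  · exact Nat.mod_mod_of_dvd _ dvd_rfl

lemma icc_eq_of_mod_eq {n u v : ℕ} (hu1 : 1 ≤ u) (hu2 : u ≤ n) (hv1 : 1 ≤ v)
    (hv2 : v ≤ n) (h : u % n = v % n) : u = v := by
  rcases Nat.lt_or_ge u n with h1 | h1 <;> rcases Nat.lt_or_ge v n with h2 | h2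
  · rwa [Nat.mod_eq_of_lt h1, Nat.mod_eq_of_lt h2] at h
  · have hv : v = n := le_antisymm hv2 h2
    subst hv
    rw [Nat.mod_eq_of_lt h1, Nat.mod_self] at h
    omega
  · have hu : u = n := le_antisymm hu2 h1
    subst hu
    rw [Nat.mod_self, Nat.mod_eq_of_lt h2] at h
    omega
  · omega

lemma modPlus_eq_iff {n x y : ℕ} (hn : 1 ≤ n) (hy1 : 1 ≤ y) (hy2 : y ≤ n) :
    modPlus x n = y ↔ x % n = y % n := by
  constructor
  · intro h
    rw [← h, modPlus_mod]
  · intro h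
    have hb := modPlus_bounds hn x
    exact icc_eq_of_mod_eq hb.1 hb.2 hy1 hy2 ((modPlus_mod x).trans h)

lemma mod_add_iff (x y c n : ℕ) : x % n = y % n ↔ (x + c) % n = (y + c) % n :=
  ⟨fun h => Nat.ModEq.add_right c h, fun h => Nat.ModEq.add_right_cancel' c h⟩

lemma mod_two_of_mod_eq {n u v : ℕ} (hn : 2 ∣ n) (h : u % n = v % n) :
    u % 2 = v % 2 :=
  Nat.ModEq.of_dvd hn h

lemma gadget_key (k a b m : ℕ) (hk : 1 ≤ k) (ha1 : 1 ≤ a) (ha2 : a ≤ 2 * k)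
    (hb1 : 1 ≤ b) (hb2 : b ≤ 2 * k) (hm1 : 1 ≤ m) (hm2 : m ≤ 2 * k) :
    gadgetPerm k m a = b ↔
      (if m % 2 = 1 ∨ a % 2 = 1 then (a + m) % (2 * k) = (b + 1) % (2 * k)
       else (a + m) % (2 * k) = (b + 3) % (2 * k)) := by
  have hn : 1 ≤ 2 * k := by omega
  unfold gadgetPerm
  rcases Nat.mod_two_eq_zero_or_one m with hm | hm <;>
    rcases Nat.mod_two_eq_zero_or_one a with hpa | hpa <;>
    simp only [hm, hpa, if_true, if_false, reduceIte] <;>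
    simp only [Nat.zero_ne_one, if_false, if_true, or_true, true_or, or_self, reduceIte]
  · -- m even, a even : uses a + m - 3
    have hm2' : 2 ≤ m := by omega
    rw [modPlus_eq_iff hn hb1 hb2, mod_add_iff _ _ 3]
    have : a + m - 3 + 3 = a + m := by omega
    rw [this]
  · -- m even, a odd : uses a + m - 1
    rw [modPlus_eq_iff hn hb1 hb2, mod_add_iff _ _ 1]
    have : a + m - 1 + 1 = a + m := by omega
    rw [this]
  · -- m odd, a even
    rw [modPlus_eq_iff hn hb1 hb2, mod_add_iff _ _ 1]
    have : a + (m - 1) + 1 = a + m := by omega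
    rw [this]
  · -- m odd, a odd
    rw [modPlus_eq_iff hn hb1 hb2, mod_add_iff _ _ 1]
    have : a + (m - 1) + 1 = a + m := by omega
    rw [this]

theorem stmt_14 (k : ℕ) (hk : 1 ≤ k) (a b : ℕ)
    (ha : a ∈ Set.Icc 1 (2 * k)) (hb : b ∈ Set.Icc 1 (2 * k)) :
    ∃! m : ℕ, m ∈ Set.Icc 1 (2 * k) ∧ gadgetPerm k m a = b := by
  obtain ⟨ha1, ha2⟩ := ha
  obtain ⟨hb1, hb2⟩ := hb
  have hn : 1 ≤ 2 * k := by omega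
  have hdvd : (2 : ℕ) ∣ 2 * k := ⟨k, rfl⟩
  -- candidate for the C1 branch
  set m₁ := modPlus (b + 2 * k + 1 - a) (2 * k) with hm₁def
  have hm₁b := modPlus_bounds hn (b + 2 * k + 1 - a)
  have hm₁mod : m₁ % (2 * k) = (b + 2 * k + 1 - a) % (2 * k) := modPlus_mod _
  have hm₁C1 : (a + m₁) % (2 * k) = (b + 1) % (2 * k) := by
    have h1 : (a + m₁) % (2 * k) = (a + (b + 2 * k + 1 - a)) % (2 * k) :=
      Nat.ModEq.add_left a hm₁mod
    have h2 : a + (b + 2 * k + 1 - a) = b + 1 + 2 * k := by omega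
    rw [h1, h2, Nat.add_mod_right]
  -- candidate for the C2 branch
  set m₂ := modPlus (b + 2 * k + 3 - a) (2 * k) with hm₂def
  have hm₂b := modPlus_bounds hn (b + 2 * k + 3 - a)
  have hm₂mod : m₂ % (2 * k) = (b + 2 * k + 3 - a) % (2 * k) := modPlus_mod _
  have hm₂C2 : (a + m₂) % (2 * k) = (b + 3) % (2 * k) := by
    have h1 : (a + m₂) % (2 * k) = (a + (b + 2 * k + 3 - a)) % (2 * k) :=
      Nat.ModEq.add_left a hm₂mod
    have h2 : a + (b + 2 * k + 3 - a) = b + 3 + 2 * k := by omega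
    rw [h1, h2, Nat.add_mod_right]
  rcases Nat.mod_two_eq_zero_or_one a with hpa | hpa
  · rcases Nat.mod_two_eq_zero_or_one b with hpb | hpb
    · -- a even, b even : solution m₁ (odd)
      have hm₁par : m₁ % 2 = 1 := by
        have := mod_two_of_mod_eq hdvd hm₁mod
        omega
      refine ⟨m₁, ⟨⟨hm₁b.1, hm₁b.2⟩, ?_⟩, ?_⟩
      · rw [gadget_key k a b m₁ hk ha1 ha2 hb1 hb2 hm₁b.1 hm₁b.2]
        simp [hm₁par, hm₁C1]
      · rintro m' ⟨⟨hm'1, hm'2⟩, hg⟩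
        rw [gadget_key k a b m' hk ha1 ha2 hb1 hb2 hm'1 hm'2] at hg
        by_cases hc : m' % 2 = 1 ∨ a % 2 = 1
        · rw [if_pos hc] at hg
          have : m' % (2 * k) = m₁ % (2 * k) :=
            Nat.ModEq.add_left_cancel' a (hg.trans hm₁C1.symm)
          exact icc_eq_of_mod_eq hm'1 hm'2 hm₁b.1 hm₁b.2 this
        · rw [if_neg hc] at hg
          have hpar := mod_two_of_mod_eq hdvd hg
          push_neg at hc
          omega
    · -- a even, b odd : solution m₂ (even)
      have hm₂par : m₂ % 2 = 0 := by
        have := mod_two_of_mod_eq hdvd hm₂mod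
        omega
      refine ⟨m₂, ⟨⟨hm₂b.1, hm₂b.2⟩, ?_⟩, ?_⟩
      · rw [gadget_key k a b m₂ hk ha1 ha2 hb1 hb2 hm₂b.1 hm₂b.2]
        have : ¬ (m₂ % 2 = 1 ∨ a % 2 = 1) := by omega
        simp [this, hm₂C2]
      · rintro m' ⟨⟨hm'1, hm'2⟩, hg⟩
        rw [gadget_key k a b m' hk ha1 ha2 hb1 hb2 hm'1 hm'2] at hg
        by_cases hc : m' % 2 = 1 ∨ a % 2 = 1
        · rw [if_pos hc] at hg
          have hpar := mod_two_of_mod_eq hdvd hg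
          omega
        · rw [if_neg hc] at hg
          have : m' % (2 * k) = m₂ % (2 * k) :=
            Nat.ModEq.add_left_cancel' a (hg.trans hm₂C2.symm)
          exact icc_eq_of_mod_eq hm'1 hm'2 hm₂b.1 hm₂b.2 this
  · -- a odd : solution m₁, both parities of m use C1
    refine ⟨m₁, ⟨⟨hm₁b.1, hm₁b.2⟩, ?_⟩, ?_⟩
    · rw [gadget_key k a b m₁ hk ha1 ha2 hb1 hb2 hm₁b.1 hm₁b.2]
      simp [hpa, hm₁C1]
    · rintro m' ⟨⟨hm'1, hm'2⟩, hg⟩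
      rw [gadget_key k a b m' hk ha1 ha2 hb1 hb2 hm'1 hm'2] at hg
      rw [if_pos (Or.inr hpa)] at hg
      have : m' % (2 * k) = m₁ % (2 * k) :=
        Nat.ModEq.add_left_cancel' a (hg.trans hm₁C1.symm)
      exact icc_eq_of_mod_eq hm'1 hm'2 hm₁b.1 hm₁b.2 this
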